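/- Let Z_1,...,Z_n be independent, fix i ∈ [n], and for each petal P containing i let Q_P be a [−1,1]-valued function of Z_{P∖{i}}. Suppose petals containing i are drawn under a distribution satisfying P(j ∈ P) ≤ ρ for all j ≠ i. If E_{P,Z}[Q_P(Z)] ≥ μ > 0, then for k independent petals P_1,...,P_k, P_Z,petals( ∑_{t=1}^k Q_{P_t}(Z) ≤ 0 ) ≤ (√ρ + 1/k)/μ². In particular, as the number of petals grows, the majority vote errs with probability O(√ρ)/μ². -/

import Mathlib

open Finset

/-- Product weight of a point of the product space (the `Z_i` are independent). -/
noncomputable def fullW {n : ℕ} {α : Fin n → Type*} [∀ i, Fintype (α i)]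
    (w : ∀ i, α i → ℝ) (z : ∀ i, α i) : ℝ :=
  ∏ i, w i (z i)


section Machinery
variable {n : ℕ} {α : Fin n → Type*} [∀ i, Fintype (α i)]

noncomputable def Exw (w : ∀ i, α i → ℝ) (f : (∀ i, α i) → ℝ) : ℝ :=
  ∑ z, fullW w z * f z

noncomputable def avg (w : ∀ i, α i → ℝ) (j : Fin n) (f : (∀ i, α i) → ℝ) :
    (∀ i, α i) → ℝ :=
  fun z => ∑ a, w j a * f (Function.update z j a)

def Indep (j : Fin n) (f : (∀ i, α i) → ℝ) : Prop :=
  ∀ z a, f (Function.update z j a) = f z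

variable {w : ∀ i, α i → ℝ}

lemma fullW_nonneg (hw : ∀ i a, 0 ≤ w i a) (z : ∀ i, α i) : 0 ≤ fullW w z :=
  Finset.prod_nonneg fun i _ => hw i (z i)

lemma sum_fullW (hw1 : ∀ i, ∑ a, w i a = 1) : ∑ z : ∀ i, α i, fullW w z = 1 := by
  classical
  have h := Finset.prod_univ_sum (fun _ : Fin n => (univ : Finset _)) (fun i a => w i a)
  rw [Fintype.piFinset_univ] at h
  simp only [fullW]
  rw [← h]
  simp [hw1]

lemma fullW_update_mul (z : ∀ i, α i) (j : Fin n) (a : α j) :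
    fullW w (Function.update z j a) * w j (z j) = fullW w z * w j a := by
  classical
  have h1 : fullW w (Function.update z j a)
      = w j a * ∏ l ∈ univ \ {j}, w l (z l) := by
    simp only [fullW]
    have hcongr : ∀ l, w l (Function.update z j a l)
        = Function.update (fun l => w l (z l)) j (w j a) l := by
      intro l
      by_cases h : l = j
      · subst h; simp
      · simp [Function.update_of_ne h]
    rw [Finset.prod_congr rfl (fun l _ => hcongr l)]
    exact Finset.prod_update_of_mem (mem_univ j) _ _
  have h2 : fullW w z = w j (z j) * ∏ l ∈ univ \ {j}, w l (z l) := by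
    have h := Finset.prod_update_of_mem (mem_univ j) (fun l => w l (z l)) (w j (z j))
    rw [Function.update_eq_self] at h
    simpa only [fullW] using h
  rw [h1, h2]; ring

lemma Exw_avg (hw1 : ∀ i, ∑ a, w i a = 1) (j : Fin n) (f : (∀ i, α i) → ℝ) :
    Exw w (avg w j f) = Exw w f := by
  classical
  have hinv : Function.Involutive
      (fun p : (∀ i, α i) × α j => ((Function.update p.1 j p.2, p.1 j) : (∀ i, α i) × α j)) := by
    intro p
    simp [Function.update_idem, Function.update_eq_self]
  set e := hinv.toPerm with he
  have lhs : Exw w (avg w j f)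
      = ∑ p : (∀ i, α i) × α j, fullW w p.1 * w j p.2 * f (Function.update p.1 j p.2) := by
    rw [Exw, Fintype.sum_prod_type]
    refine Finset.sum_congr rfl fun z _ => ?_
    rw [avg, Finset.mul_sum]
    exact Finset.sum_congr rfl fun a _ => by ring
  have key : ∀ p : (∀ i, α i) × α j,
      fullW w p.1 * w j p.2 * f (Function.update p.1 j p.2)
      = (fun q : (∀ i, α i) × α j => fullW w q.1 * w j q.2 * f q.1) (e p) := by
    intro p
    have h := fullW_update_mul (w := w) p.1 j p.2
    have he' : e p = (Function.update p.1 j p.2, p.1 j) := rfl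
    rw [he']
    simp only
    rw [← h]
  rw [lhs, Finset.sum_congr rfl (fun p _ => key p)]
  rw [Equiv.sum_comp e (fun q : (∀ i, α i) × α j => fullW w q.1 * w j q.2 * f q.1)]
  rw [Fintype.sum_prod_type, Exw]
  refine Finset.sum_congr rfl fun z _ => ?_
  have hz : (∑ y : α j, fullW w (z, y).1 * w j (z, y).2 * f (z, y).1)
      = (∑ y : α j, w j y) * (fullW w z * f z) := by
    rw [Finset.sum_mul]
    exact Finset.sum_congr rfl fun a _ => by ring
  rw [hz, hw1 j, one_mul]

end Machinery


section M2
variable {n : ℕ} {α : Fin n → Type*} [∀ i, Fintype (α i)] {w : ∀ i, α i → ℝ}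

lemma avg_indep_self (j : Fin n) (f : (∀ i, α i) → ℝ) : Indep j (avg w j f) := by
  intro z a
  simp only [avg]
  exact Finset.sum_congr rfl fun b _ => by rw [Function.update_idem]

lemma avg_of_indep (hw1 : ∀ i, ∑ a, w i a = 1) {j : Fin n} {f : (∀ i, α i) → ℝ}
    (h : Indep j f) : avg w j f = f := by
  funext z
  simp only [avg]
  rw [Finset.sum_congr rfl fun a _ => by rw [h z a], ← Finset.sum_mul, hw1 j, one_mul]

lemma avg_indep_of_indep {j l : Fin n} (hjl : j ≠ l) {f : (∀ i, α i) → ℝ}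
    (h : Indep j f) : Indep j (avg w l f) := by
  intro z a
  simp only [avg]
  refine Finset.sum_congr rfl fun b _ => ?_
  rw [Function.update_comm hjl, h]

lemma avg_sub (j : Fin n) (f g : (∀ i, α i) → ℝ) :
    avg w j (fun z => f z - g z) = fun z => avg w j f z - avg w j g z := by
  funext z
  simp only [avg, mul_sub]
  rw [Finset.sum_sub_distrib]

lemma avg_mul_of_indep {j : Fin n} {f : (∀ i, α i) → ℝ} (h : Indep j f)
    (g : (∀ i, α i) → ℝ) :
    avg w j (fun z => f z * g z) = fun z => f z * avg w j g z := by
  funext z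
  simp only [avg, Finset.mul_sum]
  exact Finset.sum_congr rfl fun a _ => by rw [h z a]; ring

lemma avg_wsum {β : Type*} (s : Finset β) (j : Fin n) (c : β → ℝ) (F : β → (∀ i, α i) → ℝ) :
    avg w j (fun z => ∑ P ∈ s, c P * F P z) = fun z => ∑ P ∈ s, c P * avg w j (F P) z := by
  funext z
  simp only [avg, Finset.mul_sum]
  rw [Finset.sum_comm]
  exact Finset.sum_congr rfl fun P _ => Finset.sum_congr rfl fun a _ => by ring

noncomputable def Em (w : ∀ i, α i → ℝ) (m : ℕ) (f : (∀ i, α i) → ℝ) : (∀ i, α i) → ℝ :=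
  if h : m < n then avg w ⟨m, h⟩ (Em w (m + 1) f) else f
termination_by n - m
decreasing_by omega

lemma Em_of_ge {m : ℕ} (h : n ≤ m) (f : (∀ i, α i) → ℝ) : Em w m f = f := by
  rw [Em]; simp [Nat.not_lt.mpr h]

lemma Em_of_lt {m : ℕ} (h : m < n) (f : (∀ i, α i) → ℝ) :
    Em w m f = avg w ⟨m, h⟩ (Em w (m + 1) f) := by
  rw [Em]; simp [h]

lemma Em_indep_of_le {m : ℕ} {j : Fin n} (hmj : m ≤ (j : ℕ)) (f : (∀ i, α i) → ℝ) :
    Indep j (Em w m f) := by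
  obtain ⟨d, hd⟩ : ∃ d, n - m = d := ⟨_, rfl⟩
  induction d generalizing m with
  | zero => omega
  | succ d ih =>
    have hm : m < n := by omega
    rw [Em_of_lt hm]
    by_cases hj : (j : ℕ) = m
    · have : j = ⟨m, hm⟩ := Fin.ext hj
      rw [this]
      exact avg_indep_self _ _
    · exact avg_indep_of_indep (by simp [Fin.ext_iff]; omega) (ih (by omega) (by omega))

lemma Em_indep {m : ℕ} {j : Fin n} {f : (∀ i, α i) → ℝ} (h : Indep j f) :
    Indep j (Em w m f) := by
  obtain ⟨d, hd⟩ : ∃ d, n - m = d := ⟨_, rfl⟩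
  induction d generalizing m with
  | zero => rw [Em_of_ge (by omega)]; exact h
  | succ d ih =>
    have hm : m < n := by omega
    rw [Em_of_lt hm]
    by_cases hj : j = ⟨m, hm⟩
    · rw [hj]; exact avg_indep_self _ _
    · exact avg_indep_of_indep hj (ih (by omega))

lemma Exw_Em (hw1 : ∀ i, ∑ a, w i a = 1) (m : ℕ) (f : (∀ i, α i) → ℝ) :
    Exw w (Em w m f) = Exw w f := by
  obtain ⟨d, hd⟩ : ∃ d, n - m = d := ⟨_, rfl⟩
  induction d generalizing m with
  | zero => rw [Em_of_ge (by omega)]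
  | succ d ih =>
    have hm : m < n := by omega
    rw [Em_of_lt hm, Exw_avg hw1, ih (m+1) (by omega)]

lemma Em_wsum {β : Type*} (s : Finset β) (m : ℕ) (c : β → ℝ) (F : β → (∀ i, α i) → ℝ) :
    Em w m (fun z => ∑ P ∈ s, c P * F P z) = fun z => ∑ P ∈ s, c P * Em w m (F P) z := by
  obtain ⟨d, hd⟩ : ∃ d, n - m = d := ⟨_, rfl⟩
  induction d generalizing m with
  | zero =>
    rw [Em_of_ge (by omega)]
    funext z
    exact Finset.sum_congr rfl fun P _ => by rw [Em_of_ge (by omega)]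
  | succ d ih =>
    have hm : m < n := by omega
    rw [Em_of_lt hm, ih (m+1) (by omega), avg_wsum]
    funext z
    exact Finset.sum_congr rfl fun P _ => by rw [Em_of_lt hm]

lemma indep_all_const {g : (∀ i, α i) → ℝ} (h : ∀ j, Indep j g) (z z' : ∀ i, α i) :
    g z = g z' := by
  classical
  have key : ∀ s : Finset (Fin n), g (fun l => if l ∈ s then z' l else z l) = g z := by
    intro s
    induction s using Finset.induction_on with
    | empty => simp
    | @insert j s hj ih =>
      have : (fun l => if l ∈ insert j s then z' l else z l)
          = Function.update (fun l => if l ∈ s then z' l else z l) j (z' j) := by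
        funext l
        by_cases hl : l = j
        · subst hl; simp
        · simp [Function.update_of_ne hl, hl]
      rw [this, h j, ih]
  have := key Finset.univ
  simpa using this.symm

lemma Exw_const (hw1 : ∀ i, ∑ a, w i a = 1) (c : ℝ) :
    Exw w (fun _ => c) = c := by
  rw [Exw]
  rw [Finset.sum_congr rfl fun z _ => rfl, ← Finset.sum_mul, sum_fullW hw1, one_mul]

lemma Em_zero (hw1 : ∀ i, ∑ a, w i a = 1) (f : (∀ i, α i) → ℝ) (z : ∀ i, α i) :
    Em w 0 f z = Exw w f := by
  have hconst : ∀ z', Em w 0 f z' = Em w 0 f z :=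
    fun z' => indep_all_const (fun j => Em_indep_of_le (Nat.zero_le _) f) z' z
  have h1 : Exw w (Em w 0 f) = Exw w f := Exw_Em hw1 0 f
  have h2 : Exw w (Em w 0 f) = Em w 0 f z := by
    rw [Exw, Finset.sum_congr rfl fun z' _ => by rw [hconst z'], ← Finset.sum_mul,
      sum_fullW hw1, one_mul]
  rw [← h2, h1]

end M2

section M3
variable {n : ℕ} {α : Fin n → Type*} [∀ i, Fintype (α i)] {w : ∀ i, α i → ℝ}

noncomputable def Dm (w : ∀ i, α i → ℝ) (m : ℕ) (f : (∀ i, α i) → ℝ) :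
    (∀ i, α i) → ℝ :=
  fun z => Em w (m + 1) f z - Em w m f z

lemma Exw_sum {β : Type*} (s : Finset β) (F : β → (∀ i, α i) → ℝ) :
    Exw w (fun z => ∑ m ∈ s, F m z) = ∑ m ∈ s, Exw w (F m) := by
  simp only [Exw, Finset.mul_sum]
  exact Finset.sum_comm

lemma Exw_mono (hw : ∀ i a, 0 ≤ w i a) {f g : (∀ i, α i) → ℝ} (h : ∀ z, f z ≤ g z) :
    Exw w f ≤ Exw w g :=
  Finset.sum_le_sum fun z _ => mul_le_mul_of_nonneg_left (h z) (fullW_nonneg hw z)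

lemma Exw_nonneg (hw : ∀ i a, 0 ≤ w i a) {f : (∀ i, α i) → ℝ} (h : ∀ z, 0 ≤ f z) :
    0 ≤ Exw w f :=
  Finset.sum_nonneg fun z _ => mul_nonneg (fullW_nonneg hw z) (h z)

lemma Exw_smul (c : ℝ) (f : (∀ i, α i) → ℝ) :
    Exw w (fun z => c * f z) = c * Exw w f := by
  simp only [Exw, Finset.mul_sum]
  exact Finset.sum_congr rfl fun z _ => by ring

lemma Dm_indep_gt {m l : ℕ} (hml : m < l) (hl : l < n) (f : (∀ i, α i) → ℝ) :
    Indep ⟨l, hl⟩ (Dm w m f) := by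
  intro z a
  simp only [Dm]
  rw [Em_indep_of_le (j := ⟨l, hl⟩) (by simpa using hml) f z a,
    Em_indep_of_le (j := ⟨l, hl⟩) (by simp; omega) f z a]

lemma avg_Dm (hw1 : ∀ i, ∑ a, w i a = 1) {m : ℕ} (hm : m < n) (f : (∀ i, α i) → ℝ) :
    avg w ⟨m, hm⟩ (Dm w m f) = fun _ => 0 := by
  have h : Dm w m f = fun z => Em w (m + 1) f z - Em w m f z := rfl
  rw [h, avg_sub]
  funext z
  have h1 : avg w ⟨m, hm⟩ (Em w (m + 1) f) = Em w m f := (Em_of_lt hm f).symm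
  have h2 : avg w ⟨m, hm⟩ (Em w m f) = Em w m f :=
    avg_of_indep hw1 (Em_indep_of_le le_rfl f)
  rw [h1, h2, sub_self]

lemma orth (hw1 : ∀ i, ∑ a, w i a = 1) {m l : ℕ} (hml : m < l) (hl : l < n)
    (f g : (∀ i, α i) → ℝ) :
    Exw w (fun z => Dm w m f z * Dm w l g z) = 0 := by
  have h1 : Exw w (fun z => Dm w m f z * Dm w l g z)
      = Exw w (avg w ⟨l, hl⟩ (fun z => Dm w m f z * Dm w l g z)) :=
    (Exw_avg hw1 _ _).symm
  rw [h1, avg_mul_of_indep (Dm_indep_gt hml hl f) (Dm w l g), avg_Dm hw1 hl g]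
  simp only [mul_zero]
  exact Exw_const hw1 0

lemma telescope (hw1 : ∀ i, ∑ a, w i a = 1) (f : (∀ i, α i) → ℝ) (z : ∀ i, α i) :
    f z - Exw w f = ∑ m ∈ Finset.range n, Dm w m f z := by
  have h := Finset.sum_range_sub (fun m => Em w m f z) n
  simp only [Dm]
  rw [h, Em_of_ge le_rfl, Em_zero hw1]

lemma var_decomp (hw1 : ∀ i, ∑ a, w i a = 1) (f : (∀ i, α i) → ℝ) :
    Exw w (fun z => f z ^ 2) - (Exw w f) ^ 2
      = ∑ m ∈ Finset.range n, Exw w (fun z => (Dm w m f z) ^ 2) := by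
  set c := Exw w f with hc
  have h1 : Exw w (fun z => (f z - c) ^ 2) = Exw w (fun z => f z ^ 2) - c ^ 2 := by
    simp only [Exw]
    have expand : ∀ z : ∀ i, α i, fullW w z * (f z - c) ^ 2
        = fullW w z * f z ^ 2 - 2 * c * (fullW w z * f z) + c ^ 2 * fullW w z := by
      intro z; ring
    rw [Finset.sum_congr rfl fun z _ => expand z]
    rw [Finset.sum_add_distrib, Finset.sum_sub_distrib, ← Finset.mul_sum, ← Finset.mul_sum]
    rw [sum_fullW hw1]
    have : (∑ z : ∀ i, α i, fullW w z * f z) = c := rfl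
    rw [this]; ring
  have h2 : Exw w (fun z => (f z - c) ^ 2)
      = ∑ m ∈ Finset.range n, Exw w (fun z => (Dm w m f z) ^ 2) := by
    have hsq : ∀ z : ∀ i, α i, (f z - c) ^ 2
        = ∑ m ∈ Finset.range n, ∑ l ∈ Finset.range n, Dm w m f z * Dm w l f z := by
      intro z
      rw [show (f z - c) ^ 2 = (f z - c) * (f z - c) by ring, telescope hw1 f z,
        Finset.sum_mul_sum]
    have : Exw w (fun z => (f z - c) ^ 2)
        = ∑ m ∈ Finset.range n, ∑ l ∈ Finset.range n,
            Exw w (fun z => Dm w m f z * Dm w l f z) := by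
      rw [show (fun z => (f z - c) ^ 2) = fun z => ∑ m ∈ Finset.range n,
          ∑ l ∈ Finset.range n, Dm w m f z * Dm w l f z from funext hsq, Exw_sum]
      exact Finset.sum_congr rfl fun m _ => Exw_sum _ _
    rw [this]
    refine Finset.sum_congr rfl fun m hm => ?_
    rw [Finset.sum_eq_single m]
    · exact congrArg _ (funext fun z => by rw [sq])
    · intro l hl hlm
      rcases lt_or_gt_of_ne hlm with h | h
      · have := orth hw1 h (Finset.mem_range.mp hm) f f
        rw [← this]
        exact congrArg _ (funext fun z => mul_comm _ _)
      · exact orth hw1 h (Finset.mem_range.mp hl) f f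
    · intro hmm; exact absurd hm hmm
  rw [← h1, h2]

end M3

section M4
variable {n : ℕ} {α : Fin n → Type*} [∀ i, Fintype (α i)] {w : ∀ i, α i → ℝ}

open Classical in
lemma varS_le_sqrt (hw : ∀ i a, 0 ≤ w i a) (hw1 : ∀ i, ∑ a, w i a = 1)
    (i : Fin n)
    (π : Finset (Fin n) → ℝ) (hπ : ∀ P, 0 ≤ π P) (hπ1 : ∑ P : Finset (Fin n), π P = 1)
    (Q : Finset (Fin n) → (∀ i, α i) → ℝ)
    (hdep : ∀ P z z', (∀ j ∈ P.erase i, z j = z' j) → Q P z = Q P z')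
    (hbd : ∀ P z, |Q P z| ≤ 1)
    (ρ : ℝ) (hρ : ∀ j : Fin n, j ≠ i → ∑ P : Finset (Fin n), (if j ∈ P then π P else 0) ≤ ρ) :
    Exw w (fun z => (∑ P : Finset (Fin n), π P * Q P z) ^ 2)
      - (Exw w (fun z => ∑ P : Finset (Fin n), π P * Q P z)) ^ 2 ≤ Real.sqrt ρ := by
  set ρ' : ℝ := max ρ 0 with hρ'
  have hρ'0 : 0 ≤ ρ' := le_max_right _ _
  set S : (∀ i, α i) → ℝ := fun z => ∑ P : Finset (Fin n), π P * Q P z with hS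
  show Exw w (fun z => S z ^ 2) - (Exw w S) ^ 2 ≤ Real.sqrt ρ
  -- individual variances are ≤ 1
  have hQsq : ∀ P, Exw w (fun z => (Q P z) ^ 2) ≤ 1 := by
    intro P
    have h1 : Exw w (fun z => (Q P z) ^ 2) ≤ Exw w (fun _ => 1) := by
      refine Exw_mono hw fun z => ?_
      have := hbd P z
      nlinarith [abs_nonneg (Q P z), sq_abs (Q P z)]
    rw [Exw_const hw1] at h1
    exact h1
  have hvarQ : ∀ P, ∑ m ∈ Finset.range n, Exw w (fun z => (Dm w m (Q P) z) ^ 2) ≤ 1 := by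
    intro P
    rw [← var_decomp hw1]
    nlinarith [hQsq P, sq_nonneg (Exw w (Q P))]
  -- constraint per level
  have key : ∀ m ∈ Finset.range n, Exw w (fun z => (Dm w m S z) ^ 2)
      ≤ ρ' * ∑ P : Finset (Fin n), π P * Exw w (fun z => (Dm w m (Q P) z) ^ 2) := by
    intro m hmr
    have hm : m < n := Finset.mem_range.mp hmr
    set j : Fin n := ⟨m, hm⟩ with hj
    set c : Finset (Fin n) → ℝ := fun P => if j ∈ P.erase i then π P else 0 with hc
    have hc0 : ∀ P, 0 ≤ c P := fun P => by
      rw [hc]; dsimp only; split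
      exacts [hπ P, le_rfl]
    have hcπ : ∀ P, c P ≤ π P := fun P => by
      rw [hc]; dsimp only; split
      exacts [le_rfl, hπ P]
    -- Dm of S as combination with coefficients c
    have claim1 : ∀ z, Dm w m S z = ∑ P : Finset (Fin n), c P * Dm w m (Q P) z := by
      intro z
      have hEm : ∀ m', Em w m' S z = ∑ P : Finset (Fin n), π P * Em w m' (Q P) z := by
        intro m'
        have := Em_wsum (w := w) (Finset.univ : Finset (Finset (Fin n))) m' π Q
        calc Em w m' S z = Em w m' (fun z => ∑ P : Finset (Fin n), π P * Q P z) z := rfl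
          _ = _ := by rw [this]
      have h1 : Dm w m S z = ∑ P : Finset (Fin n), π P * Dm w m (Q P) z := by
        simp only [Dm, hEm, mul_sub]
        rw [Finset.sum_sub_distrib]
      rw [h1]
      refine Finset.sum_congr rfl fun P _ => ?_
      by_cases hPj : j ∈ P.erase i
      · rw [hc]; simp [hPj]
      · -- Q P does not depend on coordinate j, so Dm vanishes
        have hind : Indep j (Q P) := by
          intro z' a
          refine hdep P _ _ fun l hl => ?_
          have : l ≠ j := fun h => hPj (h ▸ hl)
          exact Function.update_of_ne this a z'
        have hzero : Dm w m (Q P) z = 0 := by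
          have h2 : Em w m (Q P) = Em w (m + 1) (Q P) := by
            rw [Em_of_lt hm]
            exact avg_of_indep hw1 (Em_indep hind)
          simp [Dm, h2]
        rw [hzero]; ring
    -- pointwise Cauchy-Schwarz
    have claim2 : ∀ z, (Dm w m S z) ^ 2
        ≤ (∑ P : Finset (Fin n), c P) * ∑ P : Finset (Fin n), c P * (Dm w m (Q P) z) ^ 2 := by
      intro z
      have hcs := Finset.sum_mul_sq_le_sq_mul_sq Finset.univ
        (fun P : Finset (Fin n) => Real.sqrt (c P))
        (fun P : Finset (Fin n) => Real.sqrt (c P) * Dm w m (Q P) z)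
      have e1 : ∀ P : Finset (Fin n), Real.sqrt (c P) * (Real.sqrt (c P) * Dm w m (Q P) z)
          = c P * Dm w m (Q P) z := by
        intro P
        rw [← mul_assoc, Real.mul_self_sqrt (hc0 P)]
      have e2 : ∀ P : Finset (Fin n), (Real.sqrt (c P)) ^ 2 = c P :=
        fun P => Real.sq_sqrt (hc0 P)
      have e3 : ∀ P : Finset (Fin n), (Real.sqrt (c P) * Dm w m (Q P) z) ^ 2
          = c P * (Dm w m (Q P) z) ^ 2 := by
        intro P
        rw [mul_pow, e2]
      rw [Finset.sum_congr rfl fun P _ => e1 P, Finset.sum_congr rfl fun P _ => e2 P,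
        Finset.sum_congr rfl fun P _ => e3 P] at hcs
      rw [claim1]
      exact hcs
    -- integrate
    have claim3 : Exw w (fun z => (Dm w m S z) ^ 2)
        ≤ (∑ P : Finset (Fin n), c P)
            * ∑ P : Finset (Fin n), c P * Exw w (fun z => (Dm w m (Q P) z) ^ 2) := by
      have h1 := Exw_mono hw (f := fun z => (Dm w m S z) ^ 2)
        (g := fun z => (∑ P : Finset (Fin n), c P)
          * ∑ P : Finset (Fin n), c P * (Dm w m (Q P) z) ^ 2) claim2
      calc Exw w (fun z => (Dm w m S z) ^ 2) ≤ _ := h1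
        _ = (∑ P : Finset (Fin n), c P)
            * ∑ P : Finset (Fin n), c P * Exw w (fun z => (Dm w m (Q P) z) ^ 2) := by
          rw [Exw_smul]
          congr 1
          rw [Exw_sum]
          exact Finset.sum_congr rfl fun P _ => Exw_smul _ _
    -- bound the total coefficient
    have claim4 : (∑ P : Finset (Fin n), c P) ≤ ρ' := by
      by_cases hji : j = i
      · have : ∀ P : Finset (Fin n), c P = 0 := by
          intro P
          rw [hc]; dsimp only
          rw [if_neg]
          rw [hji]
          exact Finset.notMem_erase i P
        rw [Finset.sum_congr rfl fun P _ => this P]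
        simpa using hρ'0
      · refine le_trans (le_trans (Finset.sum_le_sum fun P _ => ?_) (hρ j hji))
          (le_max_left _ _)
        rw [hc]; dsimp only
        by_cases hPj : j ∈ P.erase i
        · rw [if_pos hPj, if_pos (Finset.mem_of_mem_erase hPj)]
        · rw [if_neg hPj]; split
          exacts [hπ P, le_rfl]
    -- combine
    have hExw_nonneg : ∀ P, 0 ≤ Exw w (fun z => (Dm w m (Q P) z) ^ 2) :=
      fun P => Exw_nonneg hw fun z => sq_nonneg _
    calc Exw w (fun z => (Dm w m S z) ^ 2)
        ≤ (∑ P : Finset (Fin n), c P)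
            * ∑ P : Finset (Fin n), c P * Exw w (fun z => (Dm w m (Q P) z) ^ 2) := claim3
      _ ≤ ρ' * ∑ P : Finset (Fin n), π P * Exw w (fun z => (Dm w m (Q P) z) ^ 2) := by
          refine mul_le_mul claim4 (Finset.sum_le_sum fun P _ =>
            mul_le_mul_of_nonneg_right (hcπ P) (hExw_nonneg P))
            (Finset.sum_nonneg fun P _ => mul_nonneg (hc0 P) (hExw_nonneg P)) hρ'0
  -- sum over levels
  have hV : Exw w (fun z => S z ^ 2) - (Exw w S) ^ 2 ≤ ρ' := by
    rw [var_decomp hw1]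
    calc ∑ m ∈ Finset.range n, Exw w (fun z => (Dm w m S z) ^ 2)
        ≤ ∑ m ∈ Finset.range n,
            ρ' * ∑ P : Finset (Fin n), π P * Exw w (fun z => (Dm w m (Q P) z) ^ 2) :=
          Finset.sum_le_sum key
      _ = ρ' * ∑ P : Finset (Fin n),
            π P * ∑ m ∈ Finset.range n, Exw w (fun z => (Dm w m (Q P) z) ^ 2) := by
          rw [← Finset.mul_sum]
          congr 1
          rw [Finset.sum_comm]
          exact Finset.sum_congr rfl fun P _ => (Finset.mul_sum _ _ _).symm
      _ ≤ ρ' * 1 := by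
          refine mul_le_mul_of_nonneg_left ?_ hρ'0
          calc ∑ P : Finset (Fin n),
                π P * ∑ m ∈ Finset.range n, Exw w (fun z => (Dm w m (Q P) z) ^ 2)
              ≤ ∑ P : Finset (Fin n), π P * 1 :=
                Finset.sum_le_sum fun P _ => mul_le_mul_of_nonneg_left (hvarQ P) (hπ P)
            _ = 1 := by simp [hπ1]
      _ = ρ' := mul_one _
  -- also variance at most 1
  have hV1 : Exw w (fun z => S z ^ 2) - (Exw w S) ^ 2 ≤ 1 := by
    have hSbd : ∀ z, S z ^ 2 ≤ 1 := by
      intro z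
      have h1 : |S z| ≤ 1 := by
        calc |S z| ≤ ∑ P : Finset (Fin n), |π P * Q P z| := Finset.abs_sum_le_sum_abs _ _
          _ ≤ ∑ P : Finset (Fin n), π P := by
            refine Finset.sum_le_sum fun P _ => ?_
            rw [abs_mul, abs_of_nonneg (hπ P)]
            calc π P * |Q P z| ≤ π P * 1 := mul_le_mul_of_nonneg_left (hbd P z) (hπ P)
              _ = π P := mul_one _
          _ = 1 := hπ1
      nlinarith [sq_abs (S z), abs_nonneg (S z)]
    have := Exw_mono hw hSbd
    rw [Exw_const hw1] at this
    nlinarith [sq_nonneg (Exw w S)]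
  -- conclude with sqrt
  have hsq : Real.sqrt ρ = Real.sqrt ρ' := by
    rcases le_or_gt 0 ρ with h | h
    · rw [hρ', max_eq_left h]
    · rw [Real.sqrt_eq_zero_of_nonpos h.le, hρ', max_eq_right h.le, Real.sqrt_zero]
  rw [hsq]
  rcases le_or_gt ρ' 1 with h | h
  · refine le_trans hV ?_
    nlinarith [Real.sqrt_nonneg ρ', Real.sq_sqrt hρ'0, sq_nonneg (Real.sqrt ρ' - 1)]
  · exact le_trans hV1 (Real.one_le_sqrt.mpr h.le)

end M4

section M5
variable {n k : ℕ}

open Classical in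
lemma sum_pi_prod (F : Fin k → Finset (Fin n) → ℝ) :
    ∑ Ps : Fin k → Finset (Fin n), ∏ t, F t (Ps t)
      = ∏ t, ∑ P : Finset (Fin n), F t P := by
  have h := Finset.prod_univ_sum (fun _ : Fin k => (Finset.univ : Finset (Finset (Fin n)))) F
  rw [Fintype.piFinset_univ] at h
  exact h.symm

open Classical in
lemma sum_nu_single (π : Finset (Fin n) → ℝ) (hπ1 : ∑ P : Finset (Fin n), π P = 1)
    (g : Finset (Fin n) → ℝ) (t₀ : Fin k) :
    ∑ Ps : Fin k → Finset (Fin n), (∏ t, π (Ps t)) * g (Ps t₀)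
      = ∑ P : Finset (Fin n), π P * g P := by
  have h1 : ∀ Ps : Fin k → Finset (Fin n),
      (∏ t, π (Ps t)) * g (Ps t₀)
        = ∏ t, (π (Ps t) * if t = t₀ then g (Ps t) else 1) := by
    intro Ps
    rw [Finset.prod_mul_distrib]
    congr 1
    simp [Finset.prod_ite_eq']
  rw [Finset.sum_congr rfl fun Ps _ => h1 Ps,
    sum_pi_prod (fun t P => π P * if t = t₀ then g P else 1)]
  have h2 : ∀ t : Fin k,
      (∑ P : Finset (Fin n), π P * if t = t₀ then g P else 1)
        = if t = t₀ then ∑ P : Finset (Fin n), π P * g P else 1 := by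
    intro t
    by_cases ht : t = t₀ <;> simp [ht, hπ1]
  rw [Finset.prod_congr rfl fun t _ => h2 t]
  simp [Finset.prod_ite_eq']

open Classical in
lemma sum_nu_pair (π : Finset (Fin n) → ℝ) (hπ1 : ∑ P : Finset (Fin n), π P = 1)
    (g h : Finset (Fin n) → ℝ) (t₀ s₀ : Fin k) (hts : t₀ ≠ s₀) :
    ∑ Ps : Fin k → Finset (Fin n), (∏ t, π (Ps t)) * g (Ps t₀) * h (Ps s₀)
      = (∑ P : Finset (Fin n), π P * g P) * ∑ P : Finset (Fin n), π P * h P := by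
  have h1 : ∀ Ps : Fin k → Finset (Fin n),
      (∏ t, π (Ps t)) * g (Ps t₀) * h (Ps s₀)
        = ∏ t, (π (Ps t) * (if t = t₀ then g (Ps t) else 1)
            * if t = s₀ then h (Ps t) else 1) := by
    intro Ps
    rw [Finset.prod_mul_distrib, Finset.prod_mul_distrib]
    congr 1
    · congr 1
      simp [Finset.prod_ite_eq']
    · simp [Finset.prod_ite_eq']
  rw [Finset.sum_congr rfl fun Ps _ => h1 Ps,
    sum_pi_prod (fun t P => π P * (if t = t₀ then g P else 1) * if t = s₀ then h P else 1)]
  have h2 : ∀ t : Fin k,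
      (∑ P : Finset (Fin n), π P * (if t = t₀ then g P else 1) * if t = s₀ then h P else 1)
        = (if t = t₀ then ∑ P : Finset (Fin n), π P * g P else 1)
          * (if t = s₀ then ∑ P : Finset (Fin n), π P * h P else 1) := by
    intro t
    by_cases ht : t = t₀
    · subst ht
      simp only [if_pos rfl, if_neg hts]
      simp
    · by_cases hs : t = s₀
      · subst hs
        simp [ht]
      · simp [ht, hs, hπ1]
  rw [Finset.prod_congr rfl fun t _ => h2 t, Finset.prod_mul_distrib]
  simp [Finset.prod_ite_eq']

end M5


set_option maxHeartbeats 1600000 in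
open Classical in
/-- Camellia boosting: petals containing `i` are drawn i.i.d. from a distribution with
pairwise containment probability `≤ ρ` for every `j ≠ i`, each decoder `Q_P` is a
`[-1,1]`-valued function of `Z_{P \ {i}}`, and the expected decoding advantage is
`E_{P,Z}[Q_P(Z)] ≥ μ > 0`. Then the majority vote over `k` independent petals fails with
probability at most `(√ρ + 1/k) / μ²`. -/
theorem stmt7 {n : ℕ} {α : Fin n → Type*} [∀ i, Fintype (α i)]
    (w : ∀ i, α i → ℝ) (hw : ∀ i a, 0 ≤ w i a) (hw1 : ∀ i, ∑ a, w i a = 1)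
    (i : Fin n)
    (π : Finset (Fin n) → ℝ) (hπ : ∀ P, 0 ≤ π P) (hπ1 : ∑ P : Finset (Fin n), π P = 1)
    (hsupp : ∀ P, π P ≠ 0 → i ∈ P)
    (Q : Finset (Fin n) → (∀ i, α i) → ℝ)
    (hdep : ∀ P z z', (∀ j ∈ P.erase i, z j = z' j) → Q P z = Q P z')
    (hbd : ∀ P z, |Q P z| ≤ 1)
    (ρ : ℝ) (hρ : ∀ j : Fin n, j ≠ i → ∑ P : Finset (Fin n), (if j ∈ P then π P else 0) ≤ ρ)
    (μ : ℝ) (hμ : 0 < μ)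
    (hadv : ∑ P : Finset (Fin n), π P * (∑ z, fullW w z * Q P z) ≥ μ)
    (k : ℕ) (hk : 0 < k) :
    ∑ Ps : Fin k → Finset (Fin n), ∑ z, (∏ t, π (Ps t)) * fullW w z *
        (if (∑ t, Q (Ps t) z) ≤ 0 then 1 else 0)
      ≤ (Real.sqrt ρ + 1 / (k : ℝ)) / μ ^ 2 := by
  classical
  set S : (∀ i, α i) → ℝ := fun z => ∑ P : Finset (Fin n), π P * Q P z with hS
  set A : ℝ := ∑ P : Finset (Fin n), π P * Exw w (Q P) with hA
  have hadv' : μ ≤ A := hadv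
  have hExwS : Exw w S = A := by
    rw [hS, hA, Exw_sum (Finset.univ) (fun P z => π P * Q P z)]
    exact Finset.sum_congr rfl fun P _ => Exw_smul _ _
  set T : ℝ := Exw w (fun z => S z ^ 2) with hT
  have hTA : T - A ^ 2 ≤ Real.sqrt ρ := by
    have h := varS_le_sqrt hw hw1 i π hπ hπ1 Q hdep hbd ρ hρ
    calc T - A ^ 2 = Exw w (fun z => (∑ P : Finset (Fin n), π P * Q P z) ^ 2)
          - (Exw w (fun z => ∑ P : Finset (Fin n), π P * Q P z)) ^ 2 := by rw [hExwS]
      _ ≤ Real.sqrt ρ := h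
  have hT0 : 0 ≤ T := Exw_nonneg hw fun z => sq_nonneg _
  have hA0 : 0 < A := lt_of_lt_of_le hμ hadv'
  have hk0 : (0 : ℝ) < (k : ℝ) := Nat.cast_pos.mpr hk
  set M : ℝ := (k : ℝ) * A with hM
  have hM0 : 0 < M := mul_pos hk0 hA0
  have hkμM : (k : ℝ) * μ ≤ M := mul_le_mul_of_nonneg_left hadv' hk0.le
  -- second moments of individual decoders
  have hQsq : ∀ P, Exw w (fun z => (Q P z) ^ 2) ≤ 1 := by
    intro P
    have h1 : Exw w (fun z => (Q P z) ^ 2) ≤ Exw w (fun _ => 1) := by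
      refine Exw_mono hw fun z => ?_
      nlinarith [hbd P z, abs_nonneg (Q P z), sq_abs (Q P z)]
    rwa [Exw_const hw1] at h1
  set B : ℝ := ∑ P : Finset (Fin n), π P * Exw w (fun z => (Q P z) ^ 2) with hB
  have hB1 : B ≤ 1 := by
    rw [hB]
    calc ∑ P : Finset (Fin n), π P * Exw w (fun z => (Q P z) ^ 2)
        ≤ ∑ P : Finset (Fin n), π P * 1 :=
          Finset.sum_le_sum fun P _ => mul_le_mul_of_nonneg_left (hQsq P) (hπ P)
      _ = 1 := by simp [hπ1]
  -- joint expectation computations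
  have hnu1 : ∑ Ps : Fin k → Finset (Fin n), (∏ t, π (Ps t)) = 1 := by
    have h := sum_nu_single π hπ1 (fun _ => 1) ⟨0, hk⟩
    simpa [hπ1] using h
  have hE1 : ∑ Ps : Fin k → Finset (Fin n), ∑ z, (∏ t, π (Ps t)) * fullW w z = 1 := by
    have h1 : ∀ Ps : Fin k → Finset (Fin n),
        (∑ z, (∏ t, π (Ps t)) * fullW w z) = ∏ t, π (Ps t) := by
      intro Ps
      rw [← Finset.mul_sum, sum_fullW hw1, mul_one]
    rw [Finset.sum_congr rfl fun Ps _ => h1 Ps, hnu1]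
  have hEY : ∑ Ps : Fin k → Finset (Fin n), ∑ z, (∏ t, π (Ps t)) * fullW w z *
      (∑ t, Q (Ps t) z) = M := by
    rw [Finset.sum_comm]
    have hz : ∀ z, (∑ Ps : Fin k → Finset (Fin n), (∏ t, π (Ps t)) * fullW w z *
        (∑ t, Q (Ps t) z)) = fullW w z * ((k : ℝ) * S z) := by
      intro z
      have h1 : ∀ Ps : Fin k → Finset (Fin n), (∏ t, π (Ps t)) * fullW w z *
          (∑ t, Q (Ps t) z) = fullW w z * ∑ t, (∏ t', π (Ps t')) * Q (Ps t) z := by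
        intro Ps
        rw [Finset.mul_sum, Finset.mul_sum]
        exact Finset.sum_congr rfl fun t _ => by ring
      rw [Finset.sum_congr rfl fun Ps _ => h1 Ps, ← Finset.mul_sum, Finset.sum_comm]
      congr 1
      have h2 : ∀ t : Fin k, (∑ Ps : Fin k → Finset (Fin n),
          (∏ t', π (Ps t')) * Q (Ps t) z) = S z := by
        intro t
        rw [sum_nu_single π hπ1 (fun P => Q P z) t]
      rw [Finset.sum_congr rfl fun t _ => h2 t]
      simp [mul_comm]
    rw [Finset.sum_congr rfl fun z _ => hz z]
    have : ∀ z, fullW w z * ((k : ℝ) * S z) = (k : ℝ) * (fullW w z * S z) := fun z => by ring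
    rw [Finset.sum_congr rfl fun z _ => this z, ← Finset.mul_sum]
    have : (∑ z, fullW w z * S z) = Exw w S := rfl
    rw [this, hExwS, hM]
  have hEY2 : ∑ Ps : Fin k → Finset (Fin n), ∑ z, (∏ t, π (Ps t)) * fullW w z *
      (∑ t, Q (Ps t) z) ^ 2 = (k : ℝ) * B + ((k : ℝ) ^ 2 - (k : ℝ)) * T := by
    rw [Finset.sum_comm]
    have hz : ∀ z, (∑ Ps : Fin k → Finset (Fin n), (∏ t, π (Ps t)) * fullW w z *
        (∑ t, Q (Ps t) z) ^ 2)
        = fullW w z * ((k : ℝ) * (∑ P : Finset (Fin n), π P * (Q P z) ^ 2)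
            + ((k : ℝ) ^ 2 - (k : ℝ)) * (S z) ^ 2) := by
      intro z
      set u : ℝ := ∑ P : Finset (Fin n), π P * (Q P z) ^ 2 with hu
      have h1 : ∀ Ps : Fin k → Finset (Fin n), (∏ t, π (Ps t)) * fullW w z *
          (∑ t, Q (Ps t) z) ^ 2
          = fullW w z * ∑ t, ∑ s, (∏ t', π (Ps t')) * Q (Ps t) z * Q (Ps s) z := by
        intro Ps
        rw [sq, Finset.sum_mul_sum]
        rw [Finset.mul_sum, Finset.mul_sum]
        refine Finset.sum_congr rfl fun t _ => ?_
        rw [Finset.mul_sum, Finset.mul_sum]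
        exact Finset.sum_congr rfl fun s _ => by ring
      rw [Finset.sum_congr rfl fun Ps _ => h1 Ps, ← Finset.mul_sum]
      congr 1
      rw [Finset.sum_comm]
      have h2 : ∀ t : Fin k, (∑ Ps : Fin k → Finset (Fin n), ∑ s : Fin k,
          (∏ t', π (Ps t')) * Q (Ps t) z * Q (Ps s) z)
          = u + ((k : ℝ) - 1) * (S z) ^ 2 := by
        intro t
        rw [Finset.sum_comm]
        have h3 : ∀ s : Fin k, (∑ Ps : Fin k → Finset (Fin n),
            (∏ t', π (Ps t')) * Q (Ps t) z * Q (Ps s) z)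
            = if s = t then u else (S z) ^ 2 := by
          intro s
          by_cases hst : s = t
          · subst hst
            rw [if_pos rfl, hu]
            have : ∀ Ps : Fin k → Finset (Fin n),
                (∏ t', π (Ps t')) * Q (Ps s) z * Q (Ps s) z
                = (∏ t', π (Ps t')) * (fun P => (Q P z) ^ 2) (Ps s) := by
              intro Ps; simp; ring
            rw [Finset.sum_congr rfl fun Ps _ => this Ps]
            simpa using sum_nu_single π hπ1 (fun P => (Q P z) ^ 2) s
          · rw [if_neg hst]
            rw [sum_nu_pair π hπ1 (fun P => Q P z) (fun P => Q P z) t s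
              (fun h => hst h.symm)]
            rw [hS, sq]
          -- note : goal uses Q (Ps t) z * Q (Ps s) z order
        rw [Finset.sum_congr rfl fun s _ => h3 s]
        have h4 : ∀ s : Fin k, (if s = t then u else (S z) ^ 2)
            = (if s = t then u - (S z) ^ 2 else 0) + (S z) ^ 2 := by
          intro s; by_cases hst : s = t <;> simp [hst]
        rw [Finset.sum_congr rfl fun s _ => h4 s, Finset.sum_add_distrib,
          Finset.sum_ite_eq' Finset.univ t (fun _ => u - (S z) ^ 2)]
        simp [Finset.card_univ]
        ring
      rw [Finset.sum_congr rfl fun t _ => h2 t]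
      simp [Finset.card_univ]
      ring
    rw [Finset.sum_congr rfl fun z _ => hz z]
    have expand : ∀ z, fullW w z * ((k : ℝ) * (∑ P : Finset (Fin n), π P * (Q P z) ^ 2)
        + ((k : ℝ) ^ 2 - (k : ℝ)) * (S z) ^ 2)
        = (k : ℝ) * (fullW w z * ∑ P : Finset (Fin n), π P * (Q P z) ^ 2)
          + ((k : ℝ) ^ 2 - (k : ℝ)) * (fullW w z * (S z) ^ 2) := fun z => by ring
    rw [Finset.sum_congr rfl fun z _ => expand z, Finset.sum_add_distrib,
      ← Finset.mul_sum, ← Finset.mul_sum]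
    have hBeq : (∑ z, fullW w z * ∑ P : Finset (Fin n), π P * (Q P z) ^ 2) = B := by
      have : (∑ z, fullW w z * ∑ P : Finset (Fin n), π P * (Q P z) ^ 2)
          = Exw w (fun z => ∑ P : Finset (Fin n), π P * (Q P z) ^ 2) := rfl
      rw [this, Exw_sum (Finset.univ) (fun P z => π P * (Q P z) ^ 2), hB]
      exact Finset.sum_congr rfl fun P _ => Exw_smul _ _
    have hTeq : (∑ z, fullW w z * (S z) ^ 2) = T := rfl
    rw [hBeq, hTeq]
  -- Chebyshev
  have cheb : ∀ (Ps : Fin k → Finset (Fin n)) (z : ∀ i, α i),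
      (∏ t, π (Ps t)) * fullW w z * (if (∑ t, Q (Ps t) z) ≤ 0 then 1 else 0)
      ≤ (∏ t, π (Ps t)) * fullW w z * ((M - ∑ t, Q (Ps t) z) ^ 2 / M ^ 2) := by
    intro Ps z
    have hνW : 0 ≤ (∏ t, π (Ps t)) * fullW w z :=
      mul_nonneg (Finset.prod_nonneg fun t _ => hπ (Ps t)) (fullW_nonneg hw z)
    refine mul_le_mul_of_nonneg_left ?_ hνW
    have hM2 : (0:ℝ) < M ^ 2 := pow_pos hM0 2
    generalize (∑ t, Q (Ps t) z) = y
    by_cases hY : y ≤ 0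
    · rw [if_pos hY, le_div_iff₀ hM2]
      nlinarith [mul_nonneg hM0.le (neg_nonneg.mpr hY), sq_nonneg y]
    · rw [if_neg hY]
      exact div_nonneg (sq_nonneg _) hM2.le
  set N : ℝ := ∑ Ps : Fin k → Finset (Fin n), ∑ z, (∏ t, π (Ps t)) * fullW w z *
      (M - ∑ t, Q (Ps t) z) ^ 2 with hNdef
  have hN0 : 0 ≤ N := by
    refine Finset.sum_nonneg fun Ps _ => Finset.sum_nonneg fun z _ => ?_
    exact mul_nonneg (mul_nonneg (Finset.prod_nonneg fun t _ => hπ (Ps t))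
      (fullW_nonneg hw z)) (sq_nonneg _)
  have hNval : N = (k : ℝ) * B + ((k : ℝ) ^ 2 - (k : ℝ)) * T - M ^ 2 := by
    have expand : ∀ (Ps : Fin k → Finset (Fin n)) (z : ∀ i, α i),
        (∏ t, π (Ps t)) * fullW w z * (M - ∑ t, Q (Ps t) z) ^ 2
        = M ^ 2 * ((∏ t, π (Ps t)) * fullW w z)
          - 2 * M * ((∏ t, π (Ps t)) * fullW w z * (∑ t, Q (Ps t) z))
          + (∏ t, π (Ps t)) * fullW w z * (∑ t, Q (Ps t) z) ^ 2 := by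
      intro Ps z; ring
    rw [hNdef]
    rw [Finset.sum_congr rfl fun Ps _ => Finset.sum_congr rfl fun z _ => expand Ps z]
    simp only [Finset.sum_add_distrib, Finset.sum_sub_distrib, ← Finset.mul_sum]
    have e1 : ∑ Ps : Fin k → Finset (Fin n), (∏ t, π (Ps t)) * (∑ z : ∀ i, α i, fullW w z)
        = 1 := by
      rw [sum_fullW hw1]
      simpa using hnu1
    rw [e1, hEY, hEY2]
    ring
  have hNle : N ≤ (k : ℝ) + (k : ℝ) ^ 2 * Real.sqrt ρ := by
    rw [hNval, hM]
    nlinarith [mul_le_mul_of_nonneg_left hB1 hk0.le,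
      mul_le_mul_of_nonneg_left hTA (sq_nonneg (k : ℝ)),
      mul_nonneg hk0.le hT0]
  -- put it together
  calc ∑ Ps : Fin k → Finset (Fin n), ∑ z, (∏ t, π (Ps t)) * fullW w z *
        (if (∑ t, Q (Ps t) z) ≤ 0 then 1 else 0)
      ≤ ∑ Ps : Fin k → Finset (Fin n), ∑ z, (∏ t, π (Ps t)) * fullW w z *
        ((M - ∑ t, Q (Ps t) z) ^ 2 / M ^ 2) :=
        Finset.sum_le_sum fun Ps _ => Finset.sum_le_sum fun z _ => cheb Ps z
    _ = N / M ^ 2 := by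
        rw [hNdef, Finset.sum_div]
        refine Finset.sum_congr rfl fun Ps _ => ?_
        rw [Finset.sum_div]
        exact Finset.sum_congr rfl fun z _ => by rw [mul_div_assoc]
    _ ≤ ((k : ℝ) + (k : ℝ) ^ 2 * Real.sqrt ρ) / ((k : ℝ) * μ) ^ 2 := by
        refine div_le_div₀ (by positivity) hNle (by positivity) ?_
        exact pow_le_pow_left₀ (by positivity) hkμM 2
    _ = (Real.sqrt ρ + 1 / (k : ℝ)) / μ ^ 2 := by
        field_simp
        ring
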